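/- Let L be a lattice and let Φ be a congruence of the lattice M̂(L) of Boolean triples. Let Θ be the congruence of L defined by Θ(x, y) iff Φ((x,x,x),(y,y,y)). Then Φ = Θ̂; that is, Φ((x₀,y₀,z₀),(x₁,y₁,z₁)) holds if and only if Θ(x₀,x₁), Θ(y₀,y₁) and Θ(z₀,z₁) all hold. Consequently, every congruence of M̂(L) is of the form Θ̂ for a unique congruence Θ of L. -/

import Mathlib

/-- A triple `(x, y, z)` in a lattice is *Boolean* if
`x = (x ⊔ y) ⊓ (x ⊔ z)`, `y = (y ⊔ x) ⊓ (y ⊔ z)`, `z = (z ⊔ x) ⊓ (z ⊔ y)`. -/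
def IsBoolean {L : Type*} [Lattice L] (t : L × L × L) : Prop :=
  t.1 = (t.1 ⊔ t.2.1) ⊓ (t.1 ⊔ t.2.2) ∧
  t.2.1 = (t.2.1 ⊔ t.1) ⊓ (t.2.1 ⊔ t.2.2) ∧
  t.2.2 = (t.2.2 ⊔ t.1) ⊓ (t.2.2 ⊔ t.2.1)

/-- The Boolean closure of a triple. -/
def bClosure {L : Type*} [Lattice L] (t : L × L × L) : L × L × L :=
  ((t.1 ⊔ t.2.1) ⊓ (t.1 ⊔ t.2.2),
   (t.2.1 ⊔ t.1) ⊓ (t.2.1 ⊔ t.2.2),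
   (t.2.2 ⊔ t.1) ⊓ (t.2.2 ⊔ t.2.1))

variable {L : Type*} [Lattice L]

theorem isBoolean_of_rep (u v w : L) :
    IsBoolean ((u ⊓ v, u ⊓ w, v ⊓ w) : L × L × L) := by
  refine ⟨le_antisymm (le_inf le_sup_left le_sup_left) ?_,
          le_antisymm (le_inf le_sup_left le_sup_left) ?_,
          le_antisymm (le_inf le_sup_left le_sup_left) ?_⟩
  · exact inf_le_inf (sup_le inf_le_left inf_le_left) (sup_le inf_le_right inf_le_left)
  · exact inf_le_inf (sup_le inf_le_left inf_le_left) (sup_le inf_le_right inf_le_right)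
  · exact inf_le_inf (sup_le inf_le_left inf_le_right) (sup_le inf_le_right inf_le_right)

theorem isBoolean_iff_rep (t : L × L × L) :
    IsBoolean t ↔ ∃ u v w : L, t.1 = u ⊓ v ∧ t.2.1 = u ⊓ w ∧ t.2.2 = v ⊓ w := by
  constructor
  · rintro ⟨h1, h2, h3⟩
    refine ⟨t.1 ⊔ t.2.1, t.1 ⊔ t.2.2, t.2.1 ⊔ t.2.2, h1, ?_, ?_⟩
    · conv_lhs => rw [h2]
      rw [sup_comm t.2.1 t.1]
    · conv_lhs => rw [h3]
      rw [sup_comm t.2.2 t.1, sup_comm t.2.2 t.2.1]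
  · rintro ⟨u, v, w, h1, h2, h3⟩
    obtain ⟨a, b, c⟩ := t
    simp only at h1 h2 h3
    subst h1 h2 h3
    exact isBoolean_of_rep u v w

theorem bClosure_isBoolean (t : L × L × L) : IsBoolean (bClosure t) := by
  rw [isBoolean_iff_rep]
  refine ⟨t.1 ⊔ t.2.1, t.1 ⊔ t.2.2, t.2.1 ⊔ t.2.2, rfl, ?_, ?_⟩
  · show (t.2.1 ⊔ t.1) ⊓ (t.2.1 ⊔ t.2.2) = _
    rw [sup_comm t.2.1 t.1]
  · show (t.2.2 ⊔ t.1) ⊓ (t.2.2 ⊔ t.2.1) = _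
    rw [sup_comm t.2.2 t.1, sup_comm t.2.2 t.2.1]

theorem IsBoolean.inf {a b : L × L × L} (ha : IsBoolean a) (hb : IsBoolean b) :
    IsBoolean (a ⊓ b) := by
  rw [isBoolean_iff_rep] at ha hb ⊢
  obtain ⟨u, v, w, h1, h2, h3⟩ := ha
  obtain ⟨u', v', w', h1', h2', h3'⟩ := hb
  refine ⟨u ⊓ u', v ⊓ v', w ⊓ w', ?_, ?_, ?_⟩
  · show a.1 ⊓ b.1 = _
    rw [h1, h1', inf_inf_inf_comm]
  · show a.2.1 ⊓ b.2.1 = _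
    rw [h2, h2', inf_inf_inf_comm]
  · show a.2.2 ⊓ b.2.2 = _
    rw [h3, h3', inf_inf_inf_comm]

theorem le_bClosure (t : L × L × L) : t ≤ bClosure t :=
  ⟨le_inf le_sup_left le_sup_left, le_inf le_sup_left le_sup_left,
   le_inf le_sup_left le_sup_left⟩

theorem bClosure_le {t c : L × L × L} (hc : IsBoolean c) (h : t ≤ c) :
    bClosure t ≤ c := by
  obtain ⟨h1, h2, h3⟩ := h
  refine ⟨?_, ?_, ?_⟩
  · rw [hc.1]; exact inf_le_inf (sup_le_sup h1 h2) (sup_le_sup h1 h3)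
  · rw [hc.2.1]; exact inf_le_inf (sup_le_sup h2 h1) (sup_le_sup h2 h3)
  · rw [hc.2.2]; exact inf_le_inf (sup_le_sup h3 h1) (sup_le_sup h3 h2)

/-- The lattice `M̂(L)` of Boolean triples of `L`, ordered componentwise. -/
def BoolTriple (L : Type*) [Lattice L] := {t : L × L × L // IsBoolean t}

instance : PartialOrder (BoolTriple L) := Subtype.partialOrder _

instance : Lattice (BoolTriple L) where
  sup a b := ⟨bClosure (a.1 ⊔ b.1), bClosure_isBoolean _⟩
  le_sup_left a b := show a.1 ≤ bClosure (a.1 ⊔ b.1) from le_trans le_sup_left (le_bClosure _)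
  le_sup_right a b := show b.1 ≤ bClosure (a.1 ⊔ b.1) from le_trans le_sup_right (le_bClosure _)
  sup_le a b c hac hbc := show bClosure (a.1 ⊔ b.1) ≤ c.1 from bClosure_le c.2 (sup_le hac hbc)
  inf a b := ⟨a.1 ⊓ b.1, a.2.inf b.2⟩
  inf_le_left a b := show a.1 ⊓ b.1 ≤ a.1 from inf_le_left
  inf_le_right a b := show a.1 ⊓ b.1 ≤ b.1 from inf_le_right
  le_inf a b c hab hac := show a.1 ≤ b.1 ⊓ c.1 from le_inf hab hac

/-- A *congruence* of a lattice: an equivalence relation compatible with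
joins and meets. -/
def IsLatticeCongruence {α : Type*} [Lattice α] (Θ : α → α → Prop) : Prop :=
  Equivalence Θ ∧
    ∀ a b c d : α, Θ a b → Θ c d → Θ (a ⊔ c) (b ⊔ d) ∧ Θ (a ⊓ c) (b ⊓ d)

theorem isBoolean_diag {L : Type*} [Lattice L] (x : L) :
    IsBoolean ((x, x, x) : L × L × L) := ⟨by simp, by simp, by simp⟩

/-- The diagonal element `(x, x, x)` of `M̂(L)`. -/
def diag {L : Type*} [Lattice L] (x : L) : BoolTriple L :=
  ⟨(x, x, x), isBoolean_diag x⟩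

/-!
Fix `o` below and `i` above every component of the two triples `a`, `b` compared by `Φ`, and let
`C = (i, o, o)`. Meeting with `C` sends `a` to `(a₁, o, o)`, which is also `(a₁, a₁, a₁) ⊓ C`,
and for `o ≤ x ≤ i` the diagonal triple is recovered from `(x, o, o)` by the unary polynomial
`t ↦ (t ⊔ (o, o, i)) ⊓ (t ⊔ (o, i, o)) = (x, x, i) ⊓ (x, i, x)`. Hence `Φ a b` gives `Φ` between
the diagonal triples of the first components; the other components follow by applying this to `Φ`
transported along the cyclic rotation of triples, a lattice automorphism of `M̂(L)` fixing the
diagonal. Conversely, `a` is the join of the three triples `(aₖ, aₖ, aₖ) ⊓ Cₖ`, where `Cₖ` is the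
rotation of `C` with `i` in place `k`.
-/

namespace IsLatticeCongruence

variable {α β : Type*} [Lattice α] [Lattice β] {Φ : α → α → Prop}

protected theorem refl (hΦ : IsLatticeCongruence Φ) (a : α) : Φ a a :=
  hΦ.1.refl a

theorem sup (hΦ : IsLatticeCongruence Φ) {a b c d : α} (hab : Φ a b) (hcd : Φ c d) :
    Φ (a ⊔ c) (b ⊔ d) :=
  (hΦ.2 a b c d hab hcd).1

theorem inf (hΦ : IsLatticeCongruence Φ) {a b c d : α} (hab : Φ a b) (hcd : Φ c d) :
    Φ (a ⊓ c) (b ⊓ d) :=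
  (hΦ.2 a b c d hab hcd).2

theorem comap (hΦ : IsLatticeCongruence Φ) (f : LatticeHom β α) :
    IsLatticeCongruence (fun a b => Φ (f a) (f b)) :=
  ⟨hΦ.1.comap f, fun a b c d hab hcd => by
    simpa only [map_sup, map_inf] using hΦ.2 _ _ _ _ hab hcd⟩

end IsLatticeCongruence

theorem IsBoolean.rotate {x y z : L} (h : IsBoolean ((x, y, z) : L × L × L)) :
    IsBoolean ((y, z, x) : L × L × L) := by
  obtain ⟨h₁, h₂, h₃⟩ := h
  exact ⟨h₂.trans (inf_comm _ _), h₃.trans (inf_comm _ _), h₁⟩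

theorem isBoolean_of_le {x y : L} (h : y ≤ x) : IsBoolean ((x, y, y) : L × L × L) := by
  refine ⟨?_, ?_, ?_⟩ <;> simp [h]

namespace BoolTriple

@[ext]
theorem ext {a b : BoolTriple L} (h : a.1 = b.1) : a = b :=
  Subtype.ext h

theorem le_def {a b : BoolTriple L} : a ≤ b ↔ a.1 ≤ b.1 :=
  Iff.rfl

@[simp]
theorem val_inf (a b : BoolTriple L) : (a ⊓ b).1 = a.1 ⊓ b.1 :=
  rfl

@[simp]
theorem val_sup (a b : BoolTriple L) : (a ⊔ b).1 = bClosure (a.1 ⊔ b.1) :=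
  rfl

@[simp]
theorem val_diag (x : L) : (diag x).1 = (x, x, x) :=
  rfl

def rotate : LatticeHom (BoolTriple L) (BoolTriple L) where
  toFun a := ⟨(a.1.2.1, a.1.2.2, a.1.1), IsBoolean.rotate a.2⟩
  map_sup' a b := Subtype.ext <| by
    show ((bClosure (a.1 ⊔ b.1)).2.1, (bClosure (a.1 ⊔ b.1)).2.2, (bClosure (a.1 ⊔ b.1)).1) =
      bClosure ((a.1.2.1, a.1.2.2, a.1.1) ⊔ (b.1.2.1, b.1.2.2, b.1.1))
    simp [bClosure, inf_comm]
  map_inf' _ _ := rfl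

@[simp]
theorem val_rotate (a : BoolTriple L) : (rotate a).1 = (a.1.2.1, a.1.2.2, a.1.1) :=
  rfl

def diagHom : LatticeHom L (BoolTriple L) where
  toFun := diag
  map_sup' x y := Subtype.ext <| by
    show (x ⊔ y, x ⊔ y, x ⊔ y) = bClosure ((x, x, x) ⊔ (y, y, y))
    simp [bClosure]
  map_inf' _ _ := rfl

def corner {o i : L} (h : o ≤ i) : BoolTriple L :=
  ⟨(i, o, o), isBoolean_of_le h⟩

@[simp]
theorem val_corner {o i : L} (h : o ≤ i) : (corner h).1 = (i, o, o) :=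
  rfl

theorem diag_inf_le (a : BoolTriple L) : diag (a.1.1 ⊓ a.1.2.1 ⊓ a.1.2.2) ≤ a :=
  ⟨inf_le_left.trans inf_le_left, inf_le_left.trans inf_le_right, inf_le_right⟩

theorem le_diag_sup (a : BoolTriple L) : a ≤ diag (a.1.1 ⊔ a.1.2.1 ⊔ a.1.2.2) :=
  ⟨le_sup_left.trans le_sup_left, le_sup_right.trans le_sup_left, le_sup_right⟩

theorem exists_diag_le_le (a b : BoolTriple L) :
    ∃ o i : L, diag o ≤ a ∧ diag o ≤ b ∧ a ≤ diag i ∧ b ≤ diag i :=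
  ⟨_, _, (diag_inf_le (a ⊓ b)).trans inf_le_left, (diag_inf_le (a ⊓ b)).trans inf_le_right,
    le_sup_left.trans (le_diag_sup (a ⊔ b)), le_sup_right.trans (le_diag_sup (a ⊔ b))⟩

variable {o i : L} (hoi : o ≤ i)

theorem inf_corner_eq {a : BoolTriple L} (ho : diag o ≤ a) :
    a ⊓ corner hoi = diag a.1.1 ⊓ corner hoi := by
  obtain ⟨ho₁, ho₂, ho₃⟩ := ho
  ext <;> simp_all

theorem diag_eq_inf_corner_sup {x : L} (hox : o ≤ x) (hxi : x ≤ i) :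
    diag x = (diag x ⊓ corner hoi ⊔ rotate (corner hoi)) ⊓
      (diag x ⊓ corner hoi ⊔ rotate (rotate (corner hoi))) := by
  ext <;> simp [bClosure, inf_eq_right.2 hox,
    sup_eq_left.2 hox, sup_eq_right.2 hox, sup_eq_right.2 hoi, sup_eq_left.2 hoi, hxi]

theorem eq_sup_diag_inf_corner {a : BoolTriple L} (ho : diag o ≤ a) (hi : a ≤ diag i) :
    a = diag a.1.1 ⊓ corner hoi ⊔ diag a.1.2.1 ⊓ rotate (rotate (corner hoi)) ⊔
      diag a.1.2.2 ⊓ rotate (corner hoi) := by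
  obtain ⟨ho₁, ho₂, ho₃⟩ := le_def.1 ho
  obtain ⟨hi₁, hi₂, hi₃⟩ := le_def.1 hi
  refine le_antisymm (le_def.2 ⟨?_, ?_, ?_⟩) (sup_le (sup_le ?_ ?_) ?_)
  · exact (le_inf le_rfl hi₁).trans
      (le_def.1 (le_sup_left.trans le_sup_left : diag a.1.1 ⊓ corner hoi ≤ _)).1
  · exact (le_inf le_rfl hi₂).trans
      (le_def.1 (le_sup_right.trans le_sup_left : diag a.1.2.1 ⊓ rotate (rotate (corner hoi)) ≤ _)).2.1
  · exact (le_inf le_rfl hi₃).trans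
      (le_def.1 (le_sup_right : diag a.1.2.2 ⊓ rotate (corner hoi) ≤ _)).2.2
  · exact ⟨inf_le_left, inf_le_right.trans ho₂, inf_le_right.trans ho₃⟩
  · exact ⟨inf_le_right.trans ho₁, inf_le_left, inf_le_right.trans ho₃⟩
  · exact ⟨inf_le_right.trans ho₁, inf_le_right.trans ho₂, inf_le_left⟩

end BoolTriple

namespace IsLatticeCongruence

open BoolTriple

variable {Φ : BoolTriple L → BoolTriple L → Prop} {a b : BoolTriple L}

theorem rel_diag_fst (hΦ : IsLatticeCongruence Φ) (h : Φ a b) : Φ (diag a.1.1) (diag b.1.1) := by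
  obtain ⟨o, i, hoa, hob, hai, hbi⟩ := exists_diag_le_le a b
  have hoi : o ≤ i := (le_def.1 (hoa.trans hai)).1
  set C := corner hoi
  have hC : Φ (diag a.1.1 ⊓ C) (diag b.1.1 ⊓ C) := by
    rw [← inf_corner_eq hoi hoa, ← inf_corner_eq hoi hob]
    exact hΦ.inf h (hΦ.refl C)
  have hdiag := hΦ.inf (hΦ.sup hC (hΦ.refl (rotate C))) (hΦ.sup hC (hΦ.refl (rotate (rotate C))))
  rwa [← diag_eq_inf_corner_sup hoi (le_def.1 hoa).1 (le_def.1 hai).1,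
    ← diag_eq_inf_corner_sup hoi (le_def.1 hob).1 (le_def.1 hbi).1] at hdiag

-- `rotate` has order three definitionally, so `h` already relates the thrice-rotated triples.
theorem rel_diag_snd_fst (hΦ : IsLatticeCongruence Φ) (h : Φ a b) :
    Φ (diag a.1.2.1) (diag b.1.2.1) :=
  (hΦ.comap (rotate.comp rotate)).rel_diag_fst (a := rotate a) (b := rotate b) h

theorem rel_diag_snd_snd (hΦ : IsLatticeCongruence Φ) (h : Φ a b) :
    Φ (diag a.1.2.2) (diag b.1.2.2) :=
  (hΦ.comap rotate).rel_diag_fst (a := rotate (rotate a)) (b := rotate (rotate b)) h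

theorem of_rel_diag (hΦ : IsLatticeCongruence Φ) (h₁ : Φ (diag a.1.1) (diag b.1.1))
    (h₂ : Φ (diag a.1.2.1) (diag b.1.2.1)) (h₃ : Φ (diag a.1.2.2) (diag b.1.2.2)) : Φ a b := by
  obtain ⟨o, i, hoa, hob, hai, hbi⟩ := exists_diag_le_le a b
  have hoi : o ≤ i := (le_def.1 (hoa.trans hai)).1
  rw [eq_sup_diag_inf_corner hoi hoa hai, eq_sup_diag_inf_corner hoi hob hbi]
  exact hΦ.sup (hΦ.sup (hΦ.inf h₁ (hΦ.refl _)) (hΦ.inf h₂ (hΦ.refl _))) (hΦ.inf h₃ (hΦ.refl _))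

theorem rel_iff_rel_diag (hΦ : IsLatticeCongruence Φ) :
    Φ a b ↔ Φ (diag a.1.1) (diag b.1.1) ∧ Φ (diag a.1.2.1) (diag b.1.2.1) ∧
      Φ (diag a.1.2.2) (diag b.1.2.2) :=
  ⟨fun h => ⟨hΦ.rel_diag_fst h, hΦ.rel_diag_snd_fst h, hΦ.rel_diag_snd_snd h⟩,
    fun ⟨h₁, h₂, h₃⟩ => hΦ.of_rel_diag h₁ h₂ h₃⟩

end IsLatticeCongruence

/-- Every congruence `Φ` of the lattice `M̂(L)` of Boolean triples is of the form
`Θ̂` for a unique congruence `Θ` of `L`, namely the restriction of `Φ` to the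
diagonal: `Φ` holds between two Boolean triples iff `Θ` holds componentwise. -/
theorem congruence_of_boolTriple_eq_hat {L : Type*} [Lattice L]
    (Φ : BoolTriple L → BoolTriple L → Prop) (hΦ : IsLatticeCongruence Φ) :
    (∀ a b : BoolTriple L,
      Φ a b ↔
        (Φ (diag a.1.1) (diag b.1.1) ∧ Φ (diag a.1.2.1) (diag b.1.2.1) ∧
          Φ (diag a.1.2.2) (diag b.1.2.2))) ∧
    ∃! Θ : L → L → Prop, IsLatticeCongruence Θ ∧
      ∀ a b : BoolTriple L,
        Φ a b ↔ (Θ a.1.1 b.1.1 ∧ Θ a.1.2.1 b.1.2.1 ∧ Θ a.1.2.2 b.1.2.2) := by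
  refine ⟨fun a b => hΦ.rel_iff_rel_diag, fun x y => Φ (diag x) (diag y),
    ⟨hΦ.comap BoolTriple.diagHom, fun a b => hΦ.rel_iff_rel_diag⟩, ?_⟩
  rintro Θ ⟨-, hΘ⟩
  funext x y
  simp [hΘ (diag x) (diag y)]
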